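/- arXiv:2411.14268 — 4 statements merged into one kernel-verified Lean document; each statement's English description precedes it below -/
import Mathlib

section
/- Let F be a CNF formula of index-width k whose variables are partitioned into n blocks of at most m variables each, and let F' be its extension-variable 3-CNF encoding. If F' admits a resolution refutation of width w and depth d, then F admits a resolution refutation of index-width at most a·w and depth at most a·d·m, where the constant a depends only on k. -/
namespace Paper


/-! ### Clauses, CNFs and resolution refutations -/

/-- A clause: a finite set of literals (variable, polarity), read as a disjunction. -/
abbrev Clause (V : Type) := Finset (V × Bool)

/-- An assignment satisfies a clause if it satisfies some literal of it. -/
def SatC {V : Type} (α : V → Bool) (C : Clause V) : Prop := ∃ l ∈ C, α l.1 = l.2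

/-- A set of clauses is unsatisfiable. -/
def Unsat {V : Type} (F : Set (Clause V)) : Prop := ∀ α : V → Bool, ∃ C ∈ F, ¬ SatC α C

/-- A resolution refutation of `F`: a sequence of clauses ending in the empty clause,
each clause either in `F` or obtained from two earlier clauses by the resolution rule
(the premises being recorded in `prem`). -/
structure Refutation (V : Type) [DecidableEq V] (F : Set (Clause V)) where
  size : ℕ
  size_pos : 0 < size
  clause : Fin size → Clause V
  prem : Fin size → Option (Fin size × Fin size × V)
  ok : ∀ i : Fin size,
    match prem i with
    | none => clause i ∈ F
    | some (j, k, x) =>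
        j < i ∧ k < i ∧ (x, true) ∈ clause j ∧ (x, false) ∈ clause k ∧
          clause i = (clause j).erase (x, true) ∪ (clause k).erase (x, false)
  last_empty : clause ⟨size - 1, Nat.sub_lt size_pos Nat.one_pos⟩ = ∅

/-- The refutation has width at most `w`. -/
def WidthLE {V : Type} [DecidableEq V] {F : Set (Clause V)}
    (R : Refutation V F) (w : ℕ) : Prop :=
  ∀ i, (R.clause i).card ≤ w

/-- The refutation has depth (longest path in the derivation DAG) at most `d`,
witnessed by a height function. -/
def DepthLE {V : Type} [DecidableEq V] {F : Set (Clause V)}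
    (R : Refutation V F) (d : ℕ) : Prop :=
  ∃ h : Fin R.size → ℕ, (∀ i, h i ≤ d) ∧
    ∀ i j k x, R.prem i = some (j, k, x) → h j < h i ∧ h k < h i


/-! ### Index-width and the extension-variable 3-CNF encoding -/

/-- Index-width of a clause: number of blocks (w.r.t. the block map `blk`) it mentions. -/
def iw {V : Type} {nB : ℕ} [DecidableEq V] (blk : V → Fin nB) (C : Clause V) : ℕ :=
  (C.image fun l => blk l.1).card

/-- The refutation has index-width at most `w`. -/
def IndexWidthLE {V : Type} [DecidableEq V] {nB : ℕ} {F : Set (Clause V)}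
    (blk : V → Fin nB) (R : Refutation V F) (w : ℕ) : Prop :=
  ∀ i, iw blk (R.clause i) ≤ w

theorem iw_mono {V : Type} {nB : ℕ} [DecidableEq V] (blk : V → Fin nB)
    {A B : Clause V} (h : A ⊆ B) : iw blk A ≤ iw blk B :=
  Finset.card_le_card (Finset.image_subset_image h)

/-- Extension variables: one variable `y_D` for every clause `D` of index-width at most `k`. -/
abbrev ExtVar {V : Type} {nB : ℕ} [DecidableEq V] (blk : V → Fin nB) (k : ℕ) : Type :=
  {D : Clause V // iw blk D ≤ k}

/-- The extension-variable 3-CNF encoding `F'` of a CNF `F` of index-width `k`: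
unit clauses `y_D` for `D ∈ F`; clauses forcing `y_{¬x} = ¬ y_x`; and clauses forcing
`y_{A ∨ B} ↔ (y_A ∨ y_B)` for all clauses of index-width at most `k`. -/
def ExtEnc {V : Type} {nB : ℕ} [DecidableEq V] (blk : V → Fin nB) (k : ℕ)
    (F : Set (Clause V)) : Set (Clause (ExtVar blk k)) :=
  { C | (∃ D ∈ F, ∃ h : iw blk D ≤ k, C = {((⟨D, h⟩ : ExtVar blk k), true)}) ∨
        (∃ x : V, ∃ hp : iw blk ({(x, true)} : Clause V) ≤ k,
            ∃ hn : iw blk ({(x, false)} : Clause V) ≤ k,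
          C = {((⟨{(x, true)}, hp⟩ : ExtVar blk k), true), (⟨{(x, false)}, hn⟩, true)} ∨
          C = {((⟨{(x, true)}, hp⟩ : ExtVar blk k), false), (⟨{(x, false)}, hn⟩, false)}) ∨
        (∃ A B : Clause V, ∃ hA : iw blk A ≤ k, ∃ hB : iw blk B ≤ k,
            ∃ hD : iw blk (A ∪ B) ≤ k,
          C = {((⟨A ∪ B, hD⟩ : ExtVar blk k), false), (⟨A, hA⟩, true), (⟨B, hB⟩, true)} ∨
          C = {((⟨A ∪ B, hD⟩ : ExtVar blk k), true), (⟨A, hA⟩, false)} ∨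
          C = {((⟨A ∪ B, hD⟩ : ExtVar blk k), true), (⟨B, hB⟩, false)}) }


/-! Read a clause `C'` over the extension variables as the CNF obtained by replacing `y_D` by `D`
and `¬y_E` by the conjunction of the negated literals of `E`; distributing, its clauses are the
*expansions* of `C'`, one for each choice of literals in the negatively occurring `E`. By
induction on the height of a clause in the refutation of `F'`, every expansion of it is a
tautology or contains a clause derivable from `F`. The axioms of `F'` expand to tautologies or to
clauses of `F`. At a resolution step on `y_D`, an expansion `T` of the resolvent comes with
derivations for `D ∪ T` and, for every `l ∈ D`, for `¬l ∨ T`; cutting the literals of `D` one at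
a time costs `|D| ≤ 2km` levels. Expansions of clauses of width `w` have index-width at most
`k w`, and the empty clause expands to itself. -/

section Clauses

variable {V : Type}

def negLit (l : V × Bool) : V × Bool := (l.1, !l.2)

@[simp] lemma negLit_negLit (l : V × Bool) : negLit (negLit l) = l := by simp [negLit]

def IsTaut (C : Clause V) : Prop := ∃ x, (x, true) ∈ C ∧ (x, false) ∈ C

lemma IsTaut.mono {C D : Clause V} (h : C ⊆ D) : IsTaut C → IsTaut D :=
  fun ⟨x, h₁, h₂⟩ => ⟨x, h h₁, h h₂⟩

lemma not_isTaut_empty : ¬ IsTaut (∅ : Clause V) := by simp [IsTaut]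

lemma isTaut_of_mem_of_negLit_mem {C : Clause V} {l : V × Bool} (h : l ∈ C) (h' : negLit l ∈ C) :
    IsTaut C := by
  obtain ⟨x, _ | _⟩ := l
  exacts [⟨x, h', h⟩, ⟨x, h, h'⟩]

variable [DecidableEq V]

lemma negLit_mem_of_isTaut_insert {C : Clause V} {l : V × Bool} (h : IsTaut (insert l C))
    (hC : ¬ IsTaut C) : negLit l ∈ C := by
  obtain ⟨x, h₁, h₂⟩ := h
  rw [Finset.mem_insert] at h₁ h₂
  rcases h₁ with rfl | h₁ <;> rcases h₂ with h₂ | h₂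
  · simp at h₂
  · exact h₂
  · exact h₂ ▸ h₁
  · exact absurd ⟨x, h₁, h₂⟩ hC

variable {nB : ℕ} (blk : V → Fin nB)

lemma iw_union_le (A B : Clause V) : iw blk (A ∪ B) ≤ iw blk A + iw blk B := by
  simpa only [iw, Finset.image_union] using Finset.card_union_le _ _

lemma iw_sup_le {ι : Type*} (s : Finset ι) (f : ι → Clause V) {k : ℕ}
    (hk : ∀ i ∈ s, iw blk (f i) ≤ k) : iw blk (s.sup f) ≤ k * s.card := by
  classical
  induction s using Finset.induction_on with
  | empty => simp [iw]
  | @insert a s ha ih =>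
    rw [Finset.sup_insert, Finset.card_insert_of_notMem ha, mul_add_one, add_comm]
    exact (iw_union_le blk _ _).trans <| add_le_add
      (hk a (Finset.mem_insert_self a s)) (ih fun i hi => hk i (Finset.mem_insert_of_mem hi))

lemma iw_image_negLit (C : Clause V) : iw blk (C.image negLit) = iw blk C := by
  simp only [iw, Finset.image_image]
  rfl

lemma card_le_of_iw_le [Fintype V] {m k : ℕ}
    (hm : ∀ b : Fin nB, (Finset.univ.filter fun v => blk v = b).card ≤ m)
    {C : Clause V} (hC : iw blk C ≤ k) : C.card ≤ 2 * (m * k) := by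
  have hfst : C.card ≤ 2 * (C.image Prod.fst).card :=
    Finset.card_le_mul_card_image _ 2 fun x _ =>
      (Finset.card_le_card_of_injOn Prod.snd (fun _ _ => Finset.mem_univ _)
        fun a ha b hb hab => Prod.ext ((Finset.mem_filter.1 ha).2.trans
          (Finset.mem_filter.1 hb).2.symm) hab).trans (by simp)
  have hblk : (C.image Prod.fst).card ≤ m * iw blk C := by
    rw [iw, ← Function.comp_def blk Prod.fst, ← Finset.image_image]
    exact Finset.card_le_mul_card_image _ m fun b _ =>
      (Finset.card_le_card fun v hv => by simpa using (Finset.mem_filter.1 hv).2).trans (hm b)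
  calc C.card ≤ 2 * (m * iw blk C) := hfst.trans (Nat.mul_le_mul_left 2 hblk)
    _ ≤ 2 * (m * k) := by gcongr

end Clauses

section Derivations

variable {V : Type} [DecidableEq V] {nB : ℕ} (blk : V → Fin nB)

def IsValidStep (F : Set (Clause V)) (clause : ℕ → Clause V) (height : ℕ → ℕ) (i : ℕ) :
    Option (ℕ × ℕ × V) → Prop
  | none => clause i ∈ F
  | some (j, k, x) => j < i ∧ k < i ∧ height j < height i ∧ height k < height i ∧
      (x, true) ∈ clause j ∧ (x, false) ∈ clause k ∧
      clause i = (clause j).erase (x, true) ∪ (clause k).erase (x, false)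

structure Derivation (F : Set (Clause V)) (W e : ℕ) (C : Clause V) where
  len : ℕ
  clause : ℕ → Clause V
  prem : ℕ → Option (ℕ × ℕ × V)
  height : ℕ → ℕ
  valid : ∀ i ≤ len, IsValidStep F clause height i (prem i)
  iw_le : ∀ i ≤ len, iw blk (clause i) ≤ W
  height_le : ∀ i ≤ len, height i ≤ e
  clause_len : clause len = C

def Derivable (F : Set (Clause V)) (W e : ℕ) (C : Clause V) : Prop :=
  Nonempty (Derivation blk F W e C)

section Glue

variable {α : Type*} {n : ℕ} {f g : ℕ → α}

def glue (n : ℕ) (f g : ℕ → α) (t : ℕ) : α := if t ≤ n then f t else g (t - (n + 1))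

lemma glue_of_le {t : ℕ} (h : t ≤ n) : glue n f g t = f t := if_pos h

@[simp] lemma glue_add (t : ℕ) : glue n f g (n + 1 + t) = g t := by
  rw [glue, if_neg (by omega), Nat.add_sub_cancel_left]

@[simp] lemma glue_succ : glue n f g (n + 1) = g 0 := glue_add 0

lemma forall_glue {P : α → Prop} {m : ℕ} (hf : ∀ t ≤ n, P (f t)) (hg : ∀ t ≤ m, P (g t)) :
    ∀ t ≤ n + 1 + m, P (glue n f g t) := by
  intro t ht
  rcases le_or_gt t n with h | h
  · exact glue_of_le h ▸ hf t h
  · obtain ⟨u, rfl⟩ : ∃ u, t = n + 1 + u := ⟨t - (n + 1), by omega⟩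
    exact (glue_add u).symm ▸ hg u (by omega)

end Glue

def shiftPrem (s : ℕ) : Option (ℕ × ℕ × V) → Option (ℕ × ℕ × V) :=
  Option.map fun q => (s + q.1, s + q.2.1, q.2.2)

lemma IsValidStep.shift {F : Set (Clause V)} {cl cl' : ℕ → Clause V} {h h' : ℕ → ℕ} {s i : ℕ}
    {p : Option (ℕ × ℕ × V)} (hcl : ∀ t ≤ i, cl' (s + t) = cl t)
    (hh : ∀ t ≤ i, h' (s + t) = h t) (hp : IsValidStep F cl h i p) :
    IsValidStep F cl' h' (s + i) (shiftPrem s p) := by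
  rcases p with _ | ⟨j, k, x⟩
  · simpa [IsValidStep, shiftPrem, hcl i le_rfl] using hp
  · obtain ⟨hj, hk, hhj, hhk, hxj, hxk, hres⟩ := hp
    simp only [IsValidStep, shiftPrem, Option.map_some, hcl i le_rfl, hh i le_rfl,
      hcl j hj.le, hcl k hk.le, hh j hj.le, hh k hk.le]
    exact ⟨by omega, by omega, hhj, hhk, hxj, hxk, hres⟩

variable {blk} {F : Set (Clause V)} {W e : ℕ}

def Derivation.ofMem {C : Clause V} (hC : C ∈ F) (hW : iw blk C ≤ W) :
    Derivation blk F W e C where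
  len := 0
  clause _ := C
  prem _ := none
  height _ := 0
  valid _ _ := hC
  iw_le _ _ := hW
  height_le _ _ := Nat.zero_le e
  clause_len := rfl

/-- The two derivations side by side, followed by the resolvent of their last lines. -/
def Derivation.resolve {A B : Clause V} {x : V} (D₁ : Derivation blk F W e A)
    (D₂ : Derivation blk F W e B) (hA : (x, true) ∈ A) (hB : (x, false) ∈ B)
    (hW : iw blk (A.erase (x, true) ∪ B.erase (x, false)) ≤ W) :
    Derivation blk F W (e + 1) (A.erase (x, true) ∪ B.erase (x, false)) where
  len := D₁.len + 1 + (D₂.len + 1)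
  clause := glue D₁.len D₁.clause <| glue D₂.len D₂.clause fun _ =>
    A.erase (x, true) ∪ B.erase (x, false)
  prem := glue D₁.len D₁.prem <| glue D₂.len (shiftPrem (D₁.len + 1) ∘ D₂.prem) fun _ =>
    some (D₁.len, D₁.len + 1 + D₂.len, x)
  height := glue D₁.len D₁.height <| glue D₂.len D₂.height fun _ => e + 1
  valid := by
    intro i hi
    rcases le_or_gt i D₁.len with h₁ | h₁
    · simpa [glue_of_le h₁, shiftPrem] using
        (D₁.valid i h₁).shift (s := 0) (cl' := glue D₁.len D₁.clause _)
          (h' := glue D₁.len D₁.height _)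
          (fun t ht => by simp [glue_of_le (ht.trans h₁)])
          (fun t ht => by simp [glue_of_le (ht.trans h₁)])
    obtain ⟨i, rfl⟩ : ∃ u, i = D₁.len + 1 + u := ⟨i - (D₁.len + 1), by omega⟩
    rcases le_or_gt i D₂.len with h₂ | h₂
    · simpa [glue_of_le h₂] using (D₂.valid i h₂).shift
        (fun t ht => by simp [glue_of_le (ht.trans h₂)])
        (fun t ht => by simp [glue_of_le (ht.trans h₂)])
    obtain rfl : i = D₂.len + 1 + 0 := by omega
    simp only [glue_add, IsValidStep, glue_of_le le_rfl, D₁.clause_len, D₂.clause_len]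
    exact ⟨by omega, by omega, Nat.lt_succ_of_le (D₁.height_le _ le_rfl),
      Nat.lt_succ_of_le (D₂.height_le _ le_rfl), hA, hB, trivial⟩
  iw_le := forall_glue (P := (iw blk · ≤ W)) D₁.iw_le <|
    forall_glue (P := (iw blk · ≤ W)) (m := 0) D₂.iw_le fun _ _ => hW
  height_le := forall_glue (P := (· ≤ e + 1))
    (fun t ht => (D₁.height_le t ht).trans e.le_succ) <| forall_glue (P := (· ≤ e + 1)) (m := 0)
      (fun t ht => (D₂.height_le t ht).trans e.le_succ) fun _ _ => le_rfl
  clause_len := by simp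

def Derivation.mono {W' e' : ℕ} {C : Clause V} (D : Derivation blk F W e C) (hW : W ≤ W')
    (he : e ≤ e') : Derivation blk F W' e' C :=
  { D with
    iw_le := fun i hi => (D.iw_le i hi).trans hW
    height_le := fun i hi => (D.height_le i hi).trans he }

lemma Derivable.mono {W' e' : ℕ} {C : Clause V} (h : Derivable blk F W e C)
    (hW : W ≤ W') (he : e ≤ e') : Derivable blk F W' e' C :=
  h.map fun D => D.mono hW he

lemma Derivable.resolve_negLit {A B : Clause V} {l : V × Bool} (hA : Derivable blk F W e A)
    (hB : Derivable blk F W e B) (hlA : l ∈ A) (hlB : negLit l ∈ B)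
    (hW : iw blk (A.erase l ∪ B.erase (negLit l)) ≤ W) :
    Derivable blk F W (e + 1) (A.erase l ∪ B.erase (negLit l)) := by
  obtain ⟨D₁⟩ := hA
  obtain ⟨D₂⟩ := hB
  obtain ⟨x, _ | _⟩ := l
  · rw [Finset.union_comm] at hW ⊢
    exact ⟨D₂.resolve D₁ hlB hlA hW⟩
  · exact ⟨D₁.resolve D₂ hlA hlB hW⟩

lemma Derivation.exists_refutation (D : Derivation blk F W e ∅) :
    ∃ R : Refutation V F, IndexWidthLE blk R W ∧ DepthLE R e := by
  let idx : ℕ → Fin (D.len + 1) := Fin.ofNat (D.len + 1)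
  have hidx {t : ℕ} (ht : t ≤ D.len) : (idx t : ℕ) = t := Nat.mod_eq_of_lt (Nat.lt_succ_of_le ht)
  have hle (i : Fin (D.len + 1)) : (i : ℕ) ≤ D.len := Nat.lt_succ_iff.1 i.2
  refine ⟨⟨D.len + 1, D.len.succ_pos, fun i => D.clause i,
    fun i => (D.prem i).map fun q => (idx q.1, idx q.2.1, q.2.2), fun i => ?_, D.clause_len⟩,
    fun i => D.iw_le i (hle i), fun i => D.height i, fun i => D.height_le i (hle i), ?_⟩
  · have hi := D.valid i (hle i)
    rcases hp : D.prem i with _ | ⟨j, k, x⟩ <;> simp only [hp, IsValidStep] at hi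
    · exact hi
    · obtain ⟨hj, hk, -, -, hxj, hxk, hres⟩ := hi
      simp only [Option.map_some, Fin.lt_def, hidx (hj.trans_le (hle i)).le,
        hidx (hk.trans_le (hle i)).le]
      exact ⟨hj, hk, hxj, hxk, hres⟩
  · intro i j k x h
    have hi := D.valid i (hle i)
    rcases hp : D.prem i with _ | ⟨j', k', x'⟩ <;> simp only [hp, IsValidStep] at hi
    · simp [hp] at h
    · obtain ⟨hj, hk, hhj, hhk, -⟩ := hi
      simp only [hp, Option.map_some, Option.some.injEq, Prod.mk.injEq] at h
      obtain ⟨rfl, rfl, -⟩ := h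
      simp only [hidx (hj.trans_le (hle i)).le, hidx (hk.trans_le (hle i)).le]
      exact ⟨hhj, hhk⟩

lemma Refutation.one_le_width (R : Refutation V F) (hF : ∅ ∉ F) {w : ℕ} (hw : WidthLE R w) :
    1 ≤ w := by
  set last : Fin R.size := ⟨R.size - 1, Nat.sub_lt R.size_pos Nat.one_pos⟩
  have hok := R.ok last
  rcases hp : R.prem last with _ | ⟨j, k, x⟩ <;> simp only [hp] at hok
  · exact absurd (R.last_empty ▸ hok) hF
  · exact (Finset.card_pos.2 ⟨_, hok.2.2.1⟩).trans_le (hw j)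

end Derivations

section WeakDerivations

variable {V : Type} [DecidableEq V] {nB : ℕ} (blk : V → Fin nB) (F : Set (Clause V)) (W : ℕ)

def WeakDerivable (e : ℕ) (T : Clause V) : Prop :=
  IsTaut T ∨ ∃ S ⊆ T, Derivable blk F W e S

variable {blk F W}

lemma WeakDerivable.mono {e e' : ℕ} {T T' : Clause V} (h : WeakDerivable blk F W e T)
    (hT : T ⊆ T') (he : e ≤ e') : WeakDerivable blk F W e' T' := by
  rcases h with h | ⟨S, hS, hd⟩
  · exact .inl (h.mono hT)
  · exact .inr ⟨S, hS.trans hT, hd.mono le_rfl he⟩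

lemma WeakDerivable.cut {e : ℕ} {T : Clause V} {l : V × Bool}
    (h₁ : WeakDerivable blk F W e (insert l T)) (h₂ : WeakDerivable blk F W e (insert (negLit l) T))
    (hW : iw blk T ≤ W) : WeakDerivable blk F W (e + 1) T := by
  by_cases hT : IsTaut T
  · exact .inl hT
  rcases h₁ with h₁ | ⟨X, hX, dX⟩
  · exact h₂.mono (Finset.insert_subset (negLit_mem_of_isTaut_insert h₁ hT) subset_rfl) e.le_succ
  rcases h₂ with h₂ | ⟨Y, hY, dY⟩
  · refine WeakDerivable.mono (.inr ⟨X, hX, dX⟩) (Finset.insert_subset ?_ subset_rfl) e.le_succ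
    simpa using negLit_mem_of_isTaut_insert h₂ hT
  refine .inr ?_
  by_cases hlX : l ∈ X
  · by_cases hlY : negLit l ∈ Y
    · have hres : X.erase l ∪ Y.erase (negLit l) ⊆ T :=
        Finset.union_subset (Finset.subset_insert_iff.1 hX) (Finset.subset_insert_iff.1 hY)
      exact ⟨_, hres, dX.resolve_negLit dY hlX hlY ((iw_mono blk hres).trans hW)⟩
    · exact ⟨Y, (Finset.subset_insert_iff_of_notMem hlY).1 hY, dY.mono le_rfl e.le_succ⟩
  · exact ⟨X, (Finset.subset_insert_iff_of_notMem hlX).1 hX, dX.mono le_rfl e.le_succ⟩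

lemma WeakDerivable.cut_clause {T : Clause V} (D : Clause V) {e : ℕ}
    (hD : WeakDerivable blk F W e (D ∪ T))
    (hneg : ∀ l ∈ D, WeakDerivable blk F W e (insert (negLit l) T))
    (hW : iw blk (D ∪ T) ≤ W) : WeakDerivable blk F W (e + D.card) T := by
  induction D using Finset.induction_on generalizing e with
  | empty => simpa using hD
  | @insert a D ha ih =>
    rw [Finset.insert_union] at hD hW
    have hW' : iw blk (D ∪ T) ≤ W := (iw_mono blk (Finset.subset_insert _ _)).trans hW
    have hcut : WeakDerivable blk F W (e + 1) (D ∪ T) :=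
      hD.cut ((hneg a (Finset.mem_insert_self a D)).mono
        (Finset.insert_subset_insert _ Finset.subset_union_right) le_rfl) hW'
    rw [Finset.card_insert_of_notMem ha, add_comm D.card, ← add_assoc]
    exact ih hcut (fun l hl => (hneg l (Finset.mem_insert_of_mem hl)).mono subset_rfl e.le_succ)
      hW'

end WeakDerivations

section Expansions

variable {V : Type} [DecidableEq V] {nB : ℕ} {blk : V → Fin nB} {k : ℕ}

def litExpansion (σ : ExtVar blk k → Clause V) : ExtVar blk k × Bool → Clause V
  | (D, true) => D.val
  | (E, false) => (σ E).image negLit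

def expansion (σ : ExtVar blk k → Clause V) (C : Clause (ExtVar blk k)) : Clause V :=
  C.sup (litExpansion σ)

/-- Selecting a nonempty set of literals rather than a single one makes `fun _ => ∅` a selector
for the empty clause, even when there are no variables at all. -/
def IsSelector (σ : ExtVar blk k → Clause V) (C : Clause (ExtVar blk k)) : Prop :=
  ∀ E, (E, false) ∈ C → (σ E).Nonempty ∧ σ E ⊆ E.val

lemma IsSelector.anti {σ : ExtVar blk k → Clause V} {C C' : Clause (ExtVar blk k)}
    (h : IsSelector σ C') (hC : ∀ E, (E, false) ∈ C → (E, false) ∈ C') : IsSelector σ C :=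
  fun E hE => h E (hC E hE)

lemma expansion_mono (σ : ExtVar blk k → Clause V) {C C' : Clause (ExtVar blk k)}
    (h : C ⊆ C') : expansion σ C ⊆ expansion σ C' :=
  Finset.sup_mono h

lemma expansion_insert (σ : ExtVar blk k → Clause V) (L : ExtVar blk k × Bool)
    (C : Clause (ExtVar blk k)) :
    expansion σ (insert L C) = litExpansion σ L ∪ expansion σ C :=
  Finset.sup_insert

lemma expansion_congr {σ τ : ExtVar blk k → Clause V} {C : Clause (ExtVar blk k)}
    (h : ∀ E, (E, false) ∈ C → σ E = τ E) : expansion σ C = expansion τ C :=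
  Finset.sup_congr rfl fun
    | (_, true), _ => rfl
    | (E, false), hE => by simp only [litExpansion, h E hE]

lemma subset_expansion {σ : ExtVar blk k → Clause V} {C : Clause (ExtVar blk k)}
    {D : ExtVar blk k} (hD : (D, true) ∈ C) : D.val ⊆ expansion σ C :=
  Finset.le_sup (f := litExpansion σ) hD

lemma exists_negLit_mem_expansion {σ : ExtVar blk k → Clause V} {C : Clause (ExtVar blk k)}
    (hσ : IsSelector σ C) {E : ExtVar blk k} (hE : (E, false) ∈ C) :
    ∃ l ∈ E.val, negLit l ∈ expansion σ C := by
  obtain ⟨l, hl⟩ := (hσ E hE).1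
  exact ⟨l, (hσ E hE).2 hl,
    Finset.le_sup (f := litExpansion σ) hE (Finset.mem_image_of_mem negLit hl)⟩

lemma iw_expansion_le {σ : ExtVar blk k → Clause V} {C : Clause (ExtVar blk k)}
    (hσ : IsSelector σ C) : iw blk (expansion σ C) ≤ k * C.card := by
  refine iw_sup_le blk C _ fun
    | (D, true), _ => D.property
    | (E, false), hE => ?_
  rw [litExpansion, iw_image_negLit]
  exact (iw_mono blk (hσ E hE).2).trans E.property

end Expansions

section Simulation

variable {V : Type} [DecidableEq V] {nB : ℕ} {blk : V → Fin nB} {k : ℕ} {F : Set (Clause V)}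
  {W : ℕ}

def ExpansionsDerivable (F : Set (Clause V)) (W e : ℕ) (C : Clause (ExtVar blk k)) : Prop :=
  ∀ σ, IsSelector σ C → WeakDerivable blk F W e (expansion σ C)

lemma ExpansionsDerivable.mono {e e' : ℕ} {C : Clause (ExtVar blk k)}
    (h : ExpansionsDerivable F W e C) (he : e ≤ e') : ExpansionsDerivable F W e' C :=
  fun σ hσ => (h σ hσ).mono subset_rfl he

lemma expansionsDerivable_of_mem_extEnc {C : Clause (ExtVar blk k)} (hC : C ∈ ExtEnc blk k F)
    (hk : k ≤ W) (e : ℕ) : ExpansionsDerivable F W e C := by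
  intro σ hσ
  simp only [ExtEnc, Set.mem_ofPred_eq] at hC
  rcases hC with ⟨D, hDF, hD, rfl⟩ | ⟨x, hp, hn, rfl | rfl⟩ |
    ⟨A, B, hA, hB, hAB, rfl | rfl | rfl⟩
  · exact .inr ⟨D, subset_expansion (D := ⟨D, hD⟩) (by simp), ⟨.ofMem hDF (hD.trans hk)⟩⟩
  · exact .inl ⟨x, subset_expansion (D := ⟨_, hp⟩) (by simp) (by simp),
      subset_expansion (D := ⟨_, hn⟩) (by simp) (by simp)⟩
  · obtain ⟨l, hl, hl'⟩ := exists_negLit_mem_expansion hσ (E := ⟨_, hp⟩) (by simp)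
    obtain ⟨l', hl₂, hl₂'⟩ := exists_negLit_mem_expansion hσ (E := ⟨_, hn⟩) (by simp)
    rw [Finset.mem_singleton.1 hl] at hl'
    rw [Finset.mem_singleton.1 hl₂] at hl₂'
    exact .inl ⟨x, hl₂', hl'⟩
  · obtain ⟨l, hl, hl'⟩ := exists_negLit_mem_expansion hσ (E := ⟨A ∪ B, hAB⟩) (by simp)
    refine .inl (isTaut_of_mem_of_negLit_mem ?_ hl')
    rcases Finset.mem_union.1 hl with h | h
    exacts [subset_expansion (D := ⟨A, hA⟩) (by simp) h,
      subset_expansion (D := ⟨B, hB⟩) (by simp) h]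
  · obtain ⟨l, hl, hl'⟩ := exists_negLit_mem_expansion hσ (E := ⟨A, hA⟩) (by simp)
    exact .inl (isTaut_of_mem_of_negLit_mem
      (subset_expansion (D := ⟨A ∪ B, hAB⟩) (by simp) (Finset.mem_union_left _ hl)) hl')
  · obtain ⟨l, hl, hl'⟩ := exists_negLit_mem_expansion hσ (E := ⟨B, hB⟩) (by simp)
    exact .inl (isTaut_of_mem_of_negLit_mem
      (subset_expansion (D := ⟨A ∪ B, hAB⟩) (by simp) (Finset.mem_union_right _ hl)) hl')

/-- An expansion `T` of the resolvent yields the expansion `D ∪ T` of the first premise and,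
for each `l ∈ D`, the expansion `¬l ∨ T` of the second one, selecting `l` in `D`. -/
lemma ExpansionsDerivable.resolve {e : ℕ} {C₁ C₂ : Clause (ExtVar blk k)} {D : ExtVar blk k}
    (h₁ : ExpansionsDerivable F W e C₁) (h₂ : ExpansionsDerivable F W e C₂)
    (hW : k * ((C₁.erase (D, true) ∪ C₂.erase (D, false)).card + 1) ≤ W) :
    ExpansionsDerivable F W (e + D.val.card) (C₁.erase (D, true) ∪ C₂.erase (D, false)) := by
  set C := C₁.erase (D, true) ∪ C₂.erase (D, false)
  intro σ hσ
  have hC₁ : C₁ ⊆ insert (D, true) C := Finset.subset_insert_iff.2 Finset.subset_union_left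
  have hC₂ : C₂ ⊆ insert (D, false) C := Finset.subset_insert_iff.2 Finset.subset_union_right
  by_cases hDC : (D, false) ∈ C
  · have hC₂C : C₂ ⊆ C := Finset.insert_eq_of_mem hDC ▸ hC₂
    exact (h₂ σ (hσ.anti fun E hE => hC₂C hE)).mono (expansion_mono σ hC₂C) (Nat.le_add_right _ _)
  refine WeakDerivable.cut_clause D.val ?_ (fun l hl => ?_) ?_
  · refine (h₁ σ (hσ.anti fun E hE => by simpa using hC₁ hE)).mono ?_ le_rfl
    exact (expansion_mono σ hC₁).trans (expansion_insert σ _ C).le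
  · set τ := Function.update σ D {l}
    have hτ : IsSelector τ C₂ := by
      intro E hE
      by_cases hED : E = D
      · subst hED
        simpa [τ] using hl
      · simp only [τ, Function.update_of_ne hED]
        exact hσ E (by simpa [hED] using hC₂ hE)
    have hτσ : expansion τ C = expansion σ C :=
      expansion_congr fun E hE => Function.update_of_ne (by rintro rfl; exact hDC hE) _ _
    refine (h₂ τ hτ).mono ?_ le_rfl
    calc expansion τ C₂ ⊆ expansion τ (insert (D, false) C) := expansion_mono τ hC₂
      _ = insert (negLit l) (expansion σ C) := by
        rw [expansion_insert, hτσ]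
        simp only [litExpansion, τ, Function.update_self, Finset.image_singleton,
          Finset.insert_eq]
  · calc iw blk (D.val ∪ expansion σ C) ≤ k + k * C.card :=
          (iw_union_le blk _ _).trans (add_le_add D.property (iw_expansion_le hσ))
      _ = k * (C.card + 1) := by ring
      _ ≤ W := hW

lemma empty_notMem_extEnc : ∅ ∉ ExtEnc blk k F := by
  intro h
  simp [ExtEnc, eq_comm (a := (∅ : Clause (ExtVar blk k)))] at h

lemma Refutation.expansionsDerivable {w B : ℕ} (R : Refutation (ExtVar blk k) (ExtEnc blk k F))
    (hw : WidthLE R w) (hW : k * (w + 1) ≤ W) (hB : ∀ D : ExtVar blk k, D.val.card ≤ B)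
    (ht : Fin R.size → ℕ)
    (hdec : ∀ i j j' x, R.prem i = some (j, j', x) → ht j < ht i ∧ ht j' < ht i)
    (i : Fin R.size) : ExpansionsDerivable F W (B * ht i) (R.clause i) := by
  induction hN : ht i using Nat.strong_induction_on generalizing i with
  | _ N ih =>
    have hok := R.ok i
    rcases hp : R.prem i with _ | ⟨j, j', D⟩ <;> simp only [hp] at hok
    · exact expansionsDerivable_of_mem_extEnc hok
        ((Nat.le_mul_of_pos_right k w.succ_pos).trans hW) _
    obtain ⟨-, -, -, -, hres⟩ := hok
    obtain ⟨hj, hj'⟩ := hdec i j j' D hp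
    obtain ⟨N, rfl⟩ : ∃ N', N = N' + 1 := ⟨N - 1, by omega⟩
    have hWi : k * ((R.clause i).card + 1) ≤ W :=
      (Nat.mul_le_mul_left k (Nat.succ_le_succ (hw i))).trans hW
    rw [hres] at hWi ⊢
    have h₁ := (ih _ (hN ▸ hj) j rfl).mono (Nat.mul_le_mul_left B (Nat.lt_succ_iff.1 (hN ▸ hj)))
    have h₂ :=
      (ih _ (hN ▸ hj') j' rfl).mono (Nat.mul_le_mul_left B (Nat.lt_succ_iff.1 (hN ▸ hj')))
    refine (h₁.resolve h₂ hWi).mono ?_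
    rw [mul_add_one]
    exact Nat.add_le_add_left (hB D) _

lemma ExpansionsDerivable.derivable_empty {e : ℕ}
    (h : ExpansionsDerivable F W e (∅ : Clause (ExtVar blk k))) : Derivable blk F W e ∅ := by
  rcases h (fun _ => ∅) (fun _ hE => absurd hE (Finset.notMem_empty _)) with h | ⟨S, hS, hd⟩
  · exact absurd h not_isTaut_empty
  · rwa [Finset.subset_empty.1 hS] at hd

end Simulation

/-- A width-`w` depth-`d` refutation of the extension encoding `F'`
yields an index-width-`O(w)` depth-`O(dm)` refutation of `F`, where each block has at
most `m` variables. -/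
theorem extension_encoding_refutation_backward :
    ∀ k : ℕ, ∃ a : ℕ, 0 < a ∧
      ∀ (V : Type) [inst : DecidableEq V] [fin : Fintype V], ∀ (n m : ℕ)
        (blk : V → Fin n) (F : Set (Clause V)),
        (∀ C ∈ F, iw blk C ≤ k) →
        (∀ b : Fin n, (Finset.univ.filter fun v => blk v = b).card ≤ m) →
        ∀ w d : ℕ,
          (∃ R' : Refutation (ExtVar blk k) (ExtEnc blk k F),
            WidthLE R' w ∧ DepthLE R' d) →
          ∃ R : Refutation V F, IndexWidthLE blk R (a * w) ∧ DepthLE R (a * d * m) := by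
  intro k
  refine ⟨2 * k + 1, Nat.succ_pos _, ?_⟩
  intro V _ _ n m blk F _ hm w d ⟨R', hw, ht, htd, hdec⟩
  have hw₁ : 1 ≤ w := R'.one_le_width empty_notMem_extEnc hw
  set last : Fin R'.size := ⟨R'.size - 1, Nat.sub_lt R'.size_pos Nat.one_pos⟩
  have hroot := R'.expansionsDerivable hw (W := (2 * k + 1) * w) (by nlinarith)
    (fun D => card_le_of_iw_le blk hm D.property) ht hdec last
  rw [R'.last_empty] at hroot
  have hdepth : 2 * (m * k) * ht last ≤ (2 * k + 1) * d * m :=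
    calc _ ≤ 2 * (m * k) * d := Nat.mul_le_mul_left _ (htd last)
      _ ≤ (2 * k + 1) * d * m := by nlinarith [Nat.zero_le (d * m)]
  obtain ⟨D⟩ := hroot.derivable_empty.mono le_rfl hdepth
  exact D.exists_refutation

end Paper
end

section
/- Let τ ∈ (Σ ∪ {*})^n be a partial assignment and C a configuration. If C is a container of τ, then τ is consistent and C contains at most |supp(τ)| bracket pairs. -/
namespace Paper


/-! ### Bracket symbols, partial states, and the bracket axioms (A1)-(A4) -/

inductive BType : Type
  | trivR | trivB | openR | openB | closeR | closeB
  deriving DecidableEq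

structure Sym (n : ℕ) where
  b : BType
  p : Fin n
  deriving DecidableEq

/-- Partial assignment of bracket symbols to positions (`none` = `*`). -/
abbrev PState (n : ℕ) := Fin n → Option (Sym n)

/-- Positions `i` and `j` are paired (pointers point at each other). -/
def Paired {n : ℕ} (ρ : PState n) (i j : Fin n) : Prop :=
  ∃ σ τ : Sym n, ρ i = some σ ∧ ρ j = some τ ∧ σ.p = j ∧ τ.p = i

/-- Axiom (A1) is falsified: start/end of string condition fails on assigned entries. -/
def ViolA1 {n : ℕ} (ρ : PState n) : Prop :=
  (∃ i : Fin n, (i : ℕ) = 0 ∧ ∃ σ, ρ i = some σ ∧ ¬(σ.b = BType.trivR ∨ σ.b = BType.openR)) ∨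
  (∃ i : Fin n, (i : ℕ) = n - 1 ∧ ∃ σ, ρ i = some σ ∧ ¬(σ.b = BType.trivB ∨ σ.b = BType.closeB))

/-- Axiom (A2) is falsified: pointers fail to define colour-matched bracket pairs. -/
def ViolA2 {n : ℕ} (ρ : PState n) : Prop :=
  (∃ i j : Fin n, ∃ σ τ : Sym n, ρ i = some σ ∧ ρ j = some τ ∧ σ.p = j ∧ τ.p ≠ i) ∨
  (∃ i : Fin n, ∃ σ : Sym n, ρ i = some σ ∧ σ.p = i ∧
    ¬(σ.b = BType.trivR ∨ σ.b = BType.trivB)) ∨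
  (∃ i j : Fin n, ∃ σ τ : Sym n, i < j ∧ ρ i = some σ ∧ ρ j = some τ ∧ σ.p = j ∧ τ.p = i ∧
    ¬((σ.b = BType.openR ∧ τ.b = BType.closeR) ∨ (σ.b = BType.openB ∧ τ.b = BType.closeB)))

/-- Axiom (A3) is falsified: two pairs are incorrectly nested. -/
def ViolA3 {n : ℕ} (ρ : PState n) : Prop :=
  ∃ i i' j j' : Fin n, Paired ρ i j ∧ Paired ρ i' j' ∧ i < i' ∧ i' < j ∧ j < j'

/-- Axiom (A4) is falsified: a red-to-blue transition occurs at consecutive indices. -/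
def ViolA4 {n : ℕ} (ρ : PState n) : Prop :=
  ∃ i j : Fin n, (j : ℕ) = (i : ℕ) + 1 ∧ ∃ σ τ : Sym n, ρ i = some σ ∧ ρ j = some τ ∧
    (σ.b = BType.closeR ∨ σ.b = BType.trivR) ∧ (τ.b = BType.openB ∨ τ.b = BType.trivB)

/-- The partial state falsifies one of the axioms (A1)-(A4). -/
def Falsifies {n : ℕ} (ρ : PState n) : Prop := ViolA1 ρ ∨ ViolA2 ρ ∨ ViolA3 ρ ∨ ViolA4 ρ

/-- A partial assignment is consistent if it falsifies no axiom. -/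
def ConsistentPS {n : ℕ} (ρ : PState n) : Prop := ¬ Falsifies ρ


/-! ### Configurations, areas and containers -/

/-- An interval of positions, given by its two endpoints. -/
abbrev Ival (n : ℕ) := Fin n × Fin n

def ivSet {n : ℕ} (I : Ival n) : Set (Fin n) := Set.Icc I.1 I.2

noncomputable def ivLen {n : ℕ} (I : Ival n) : ℕ := (ivSet I).ncard

/-- The area of a bracket pair: the indices it encloses. -/
def areaP {n : ℕ} (P : Ival n) : Set (Fin n) := Set.Icc P.1 P.2

/-- `P` is a bracket pair of `C`. -/
def PairOf {n : ℕ} (C : PState n) (P : Ival n) : Prop := P.1 ≤ P.2 ∧ Paired C P.1 P.2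

/-- The area of a configuration: all indices covered by some of its bracket pairs. -/
def areaC {n : ℕ} (C : PState n) : Set (Fin n) := {x | ∃ P, PairOf C P ∧ x ∈ areaP P}

/-- A configuration: a consistent partial assignment consisting of bracket pairs. -/
def IsConfig {n : ℕ} (C : PState n) : Prop :=
  ConsistentPS C ∧ ∀ i σ, C i = some σ → C σ.p ≠ none

/-- A configuration is closed if it assigns all covered indices. -/
def IsClosedC {n : ℕ} (C : PState n) : Prop := ∀ x ∈ areaC C, C x ≠ none

/-- `C'` extends `C`. -/
def ExtendsPS {n : ℕ} (C C' : PState n) : Prop := ∀ i σ, C i = some σ → C' i = some σ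

/-- A configuration is locally consistent if some closed configuration extends it. -/
def LocallyConsistent {n : ℕ} (C : PState n) : Prop :=
  ∃ C', IsConfig C' ∧ IsClosedC C' ∧ ExtendsPS C C'

/-- The support of a partial assignment. -/
def suppS {n : ℕ} (τ : PState n) : Set (Fin n) := {i | τ i ≠ none}

/-- `C` dominates `τ`: the support of `τ` is covered by `C` and some closed
configuration extends both `C` and `τ`. -/
def Dominates {n : ℕ} (C τ : PState n) : Prop :=
  suppS τ ⊆ areaC C ∧ ∃ C', IsConfig C' ∧ IsClosedC C' ∧ ExtendsPS C C' ∧ ExtendsPS τ C'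

/-- A top-level bracket pair of `C`. -/
def TopLevel {n : ℕ} (C : PState n) (P : Ival n) : Prop :=
  PairOf C P ∧ ∀ P', PairOf C P' → P' ≠ P → ¬ areaP P ⊆ areaP P'

/-- The pair `P` is red (its left bracket is a red symbol). -/
def RedPair {n : ℕ} (C : PState n) (P : Ival n) : Prop :=
  ∃ σ, C P.1 = some σ ∧ (σ.b = BType.trivR ∨ σ.b = BType.openR)

/-- The pair `P` is blue. -/
def BluePair {n : ℕ} (C : PState n) (P : Ival n) : Prop :=
  ∃ σ, C P.1 = some σ ∧ (σ.b = BType.trivB ∨ σ.b = BType.openB)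

/-- A monotone configuration: all red top-level pairs lie before some index,
all blue top-level pairs after it. -/
def MonoConfig {n : ℕ} (C : PState n) : Prop :=
  ∃ t : ℕ, (∀ P, TopLevel C P → RedPair C P → (P.2 : ℕ) < t) ∧
           (∀ P, TopLevel C P → BluePair C P → t < (P.1 : ℕ))

/-- Remove a bracket pair from a configuration. -/
def removePair {n : ℕ} (C : PState n) (P : Ival n) : PState n :=
  fun i => if i = P.1 ∨ i = P.2 then none else C i

/-- `C` is a container of `τ`: a locally consistent monotone configuration dominating
`τ`, minimal with this property. -/
def IsContainer {n : ℕ} (C τ : PState n) : Prop :=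
  IsConfig C ∧ LocallyConsistent C ∧ MonoConfig C ∧ Dominates C τ ∧
    ∀ P, PairOf C P → ¬ Dominates (removePair C P) τ


lemma paired_mono {n : ℕ} {ρ ρ' : PState n} (h : ExtendsPS ρ ρ') {i j : Fin n}
    (hp : Paired ρ i j) : Paired ρ' i j := by
  obtain ⟨σ, τ, h1, h2, h3, h4⟩ := hp
  exact ⟨σ, τ, h _ _ h1, h _ _ h2, h3, h4⟩

lemma falsifies_mono {n : ℕ} {ρ ρ' : PState n} (h : ExtendsPS ρ ρ') :
    Falsifies ρ → Falsifies ρ' := by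
  rintro (h1 | h2 | h3 | h4)
  · rcases h1 with ⟨i, hi, σ, hσ, hb⟩ | ⟨i, hi, σ, hσ, hb⟩
    · exact Or.inl (Or.inl ⟨i, hi, σ, h _ _ hσ, hb⟩)
    · exact Or.inl (Or.inr ⟨i, hi, σ, h _ _ hσ, hb⟩)
  · rcases h2 with ⟨i, j, σ, τ, h1, h2, h3, h4⟩ | ⟨i, σ, h1, h2, h3⟩ |
      ⟨i, j, σ, τ, hij, h1, h2, h3, h4, h5⟩
    · exact Or.inr (Or.inl (Or.inl ⟨i, j, σ, τ, h _ _ h1, h _ _ h2, h3, h4⟩))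
    · exact Or.inr (Or.inl (Or.inr (Or.inl ⟨i, σ, h _ _ h1, h2, h3⟩)))
    · exact Or.inr (Or.inl (Or.inr (Or.inr ⟨i, j, σ, τ, hij, h _ _ h1, h _ _ h2, h3, h4, h5⟩)))
  · rcases h3 with ⟨i, i', j, j', p1, p2, o1, o2, o3⟩
    exact Or.inr (Or.inr (Or.inl ⟨i, i', j, j', paired_mono h p1, paired_mono h p2, o1, o2, o3⟩))
  · rcases h4 with ⟨i, j, hij, σ, τ, h1, h2, h3, h4⟩
    exact Or.inr (Or.inr (Or.inr ⟨i, j, hij, σ, τ, h _ _ h1, h _ _ h2, h3, h4⟩))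

/-- Two bracket pairs of the same partial state sharing an endpoint are equal. -/
lemma pair_eq_of_share {n : ℕ} {C : PState n} {P R : Ival n}
    (hP : PairOf C P) (hR : PairOf C R)
    (hshare : R.1 = P.1 ∨ R.1 = P.2 ∨ R.2 = P.1 ∨ R.2 = P.2) : R = P := by
  obtain ⟨hle, σ, τ, hσ, hτ, hpσ, hpτ⟩ := hP
  obtain ⟨hle', σ', τ', hσ', hτ', hpσ', hpτ'⟩ := hR
  rcases hshare with h | h | h | h
  · rw [h] at hσ'
    have : σ' = σ := Option.some.inj (hσ'.symm.trans hσ)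
    have h2 : R.2 = P.2 := by rw [← hpσ', this, hpσ]
    exact Prod.ext h h2
  · rw [h] at hσ'
    have : σ' = τ := Option.some.inj (hσ'.symm.trans hτ)
    have h2 : R.2 = P.1 := by rw [← hpσ', this, hpτ]
    have heq : P.1 = P.2 := le_antisymm hle (h ▸ h2 ▸ hle')
    exact Prod.ext (h.trans heq.symm) (h2.trans heq)
  · rw [h] at hτ'
    have : τ' = σ := Option.some.inj (hτ'.symm.trans hσ)
    have h1 : R.1 = P.2 := by rw [← hpτ', this, hpσ]
    have heq : P.1 = P.2 := le_antisymm hle (h1 ▸ h ▸ hle')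
    exact Prod.ext (h1.trans heq.symm) (h.trans heq)
  · rw [h] at hτ'
    have : τ' = τ := Option.some.inj (hτ'.symm.trans hτ)
    have h1 : R.1 = P.1 := by rw [← hpτ', this, hpτ]
    exact Prod.ext h1 h

/-- A container of `τ` witnesses that `τ` is consistent, and it has
at most `|supp(τ)|` bracket pairs. -/
theorem container_consistent_and_small :
    ∀ (n : ℕ) (τ C : PState n), IsContainer C τ →
      ConsistentPS τ ∧ {P : Ival n | PairOf C P}.ncard ≤ (suppS τ).ncard := by
  intro n τ C hcont
  obtain ⟨hcfg, hlc, hmono, hdom, hmin⟩ := hcont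
  obtain ⟨hsub, C', hC'cfg, hC'cl, hextC, hextτ⟩ := hdom
  constructor
  · intro hf
    exact hC'cfg.1 (falsifies_mono hextτ hf)
  · -- For each pair P, pick a support element only covered (among pairs of C) by P.
    have key : ∀ P : Ival n, PairOf C P → ∃ i, i ∈ suppS τ ∧
        ∀ R, PairOf C R → i ∈ areaP R → R = P := by
      intro P hP
      have hnd := hmin P hP
      -- the common extension still extends the removed configuration
      have hext' : ExtendsPS (removePair C P) C' := by
        intro i σ hi
        unfold removePair at hi
        split at hi
        · exact absurd hi (by simp)
        · exact hextC _ _ hi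
      have hnc : ¬ suppS τ ⊆ areaC (removePair C P) := by
        intro hc
        exact hnd ⟨hc, C', hC'cfg, hC'cl, hext', hextτ⟩
      obtain ⟨i, hi, hni⟩ := Set.not_subset.mp hnc
      refine ⟨i, hi, ?_⟩
      intro R hR hiR
      by_contra hne
      -- then R avoids P's endpoints, hence survives removal and covers i
      have hshare : ¬(R.1 = P.1 ∨ R.1 = P.2 ∨ R.2 = P.1 ∨ R.2 = P.2) := by
        intro hs
        exact hne (pair_eq_of_share hP hR hs)
      push_neg at hshare
      obtain ⟨h1, h2, h3, h4⟩ := hshare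
      obtain ⟨hle, σ, τ', hσ, hτ, hpσ, hpτ⟩ := hR
      have hR' : PairOf (removePair C P) R := by
        refine ⟨hle, σ, τ', ?_, ?_, hpσ, hpτ⟩
        · unfold removePair; rw [if_neg (by tauto)]; exact hσ
        · unfold removePair; rw [if_neg (by tauto)]; exact hτ
      exact hni ⟨R, hR', hiR⟩
    classical
    set f : Ival n → Fin n := fun P => if h : PairOf C P then (key P h).choose else P.1 with hfdef
    have hf1 : ∀ P : Ival n, PairOf C P → f P ∈ suppS τ := by
      intro P hP; simp only [hfdef, dif_pos hP]; exact (key P hP).choose_spec.1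
    have hf2 : ∀ P : Ival n, (hP : PairOf C P) → ∀ R, PairOf C R → f P ∈ areaP R → R = P := by
      intro P hP; simp only [hfdef, dif_pos hP]; exact (key P hP).choose_spec.2
    apply Set.ncard_le_ncard_of_injOn f (fun P hP => hf1 P hP)
    · intro P hP Q hQ hfeq
      have hiP : f P ∈ areaC C := hsub (hf1 P hP)
      obtain ⟨R, hR, hiR⟩ := hiP
      have e1 : R = P := hf2 P hP R hR hiR
      have e2 : R = Q := hf2 Q hQ R hR (by rw [← hfeq]; exact hiR)
      exact e1.symm.trans e2

end Paper
end

section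
/- Consider a call Adversary(C, I, ℓ) of the adversary strategy at recursion depth ℓ, set c_ℓ = 4dw − (ℓ_0 − ℓ), and let C̃_0 = C and C̃_{i+1} = Adversary(C_i, I_i, ℓ+1) be its recursive call data. If for some i ∈ [d−1] the configuration C̃_i \ C has a c_ℓ-buffer in I, the configuration C̃_i \ C_{i−1} has a c_{ℓ+1}-buffer in I_{i−1}, and the configuration C̃_{i+1} \ C_i has a c_{ℓ+1}-buffer in I_i, then C̃_{i+1} \ C has a c_ℓ-buffer in I. -/
namespace Paper


/-! ### The prover-adversary game for the bracket axioms -/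

inductive PMove (n : ℕ) : Type
  | query (i : Fin n)
  | forget (S : Finset (Fin n))

/-- A history of the game: each round records the prover's move and,
for a query, the adversary's answer. -/
abbrev Hist (n : ℕ) := List (PMove n × Option (Sym n))

def stepState {n : ℕ} (ρ : PState n) : PMove n × Option (Sym n) → PState n
  | (PMove.query i, some σ) => Function.update ρ i (some σ)
  | (PMove.query _, none) => ρ
  | (PMove.forget S, _) => fun j => if j ∈ S then none else ρ j

/-- The game state after a given history (initially everything is `*`). -/
def stateOf {n : ℕ} (h : Hist n) : PState n := h.foldl stepState (fun _ => none)

/-- A (history-dependent) prover strategy. -/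
abbrev ProverStrat (n : ℕ) := Hist n → PMove n

/-- A (history-dependent) adversary strategy: answers queried indices with symbols. -/
abbrev AdvStrat (n : ℕ) := Hist n → Fin n → Sym n

/-- The history of the play between a prover and an adversary after `t` rounds. -/
def play {n : ℕ} (P : ProverStrat n) (A : AdvStrat n) : ℕ → Hist n
  | 0 => []
  | t + 1 =>
    let h := play P A t
    match P h with
    | PMove.query i => h ++ [(PMove.query i, some (A h i))]
    | PMove.forget S => h ++ [(PMove.forget S, none)]

/-- Memory size of a state: the number of assigned (non-`*`) entries. -/
noncomputable def memSize {n : ℕ} (ρ : PState n) : ℕ := {i : Fin n | ρ i ≠ none}.ncard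


/-! ### The adversary strategy: Move, PlayRound and successful runs -/

/-- The bracket pairs replaced by `Move(C, I)`: red pairs to the right of `I` and
blue pairs to the left of `I`. -/
def Repl {n : ℕ} (C : PState n) (I : Ival n) : Set (Ival n) :=
  {P | PairOf C P ∧ ((RedPair C P ∧ (I.2 : ℕ) < (P.1 : ℕ)) ∨
                     (BluePair C P ∧ (P.2 : ℕ) < (I.1 : ℕ)))}

/-- The area of the minimal bracket pair strictly containing `P`. -/
def extArea {n : ℕ} (P : Ival n) : Set (Fin n) :=
  {x | (P.1 : ℕ) - 1 ≤ (x : ℕ) ∧ (x : ℕ) ≤ (P.2 : ℕ) + 1}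

def Endpts {n : ℕ} (S : Set (Ival n)) : Set (Fin n) := {x | ∃ P ∈ S, x = P.1 ∨ x = P.2}

/-- Specification of `C' = Move(C, I)`: each replaced pair is covered by a minimal pair
of the opposite colour, overlapping replacements being merged (`g` maps each replaced
pair to the resulting new pair), everything else is unchanged. -/
def MoveSpec {n : ℕ} (C : PState n) (I : Ival n) (C' : PState n) : Prop :=
  ∃ (New : Set (Ival n)) (g : Ival n → Ival n),
    (∀ P ∈ Repl C I, g P ∈ New) ∧
    (∀ Q ∈ New, ∃ P ∈ Repl C I, g P = Q) ∧
    (∀ Q ∈ New, areaP Q = {x | ∃ P ∈ Repl C I, g P = Q ∧ x ∈ extArea P}) ∧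
    (∀ Q ∈ New, ∀ Q' ∈ New, Q ≠ Q' → areaP Q ∩ areaP Q' = ∅) ∧
    (∀ P, PairOf C' P ↔ ((PairOf C P ∧ P ∉ Repl C I) ∨ P ∈ New)) ∧
    (∀ i : Fin n, i ∉ Endpts (Repl C I) → i ∉ Endpts New → C' i = C i) ∧
    (∀ i ∈ Endpts (Repl C I), i ∉ Endpts New → C' i = none) ∧
    (∀ Q ∈ New, ∀ P ∈ Repl C I, g P = Q →
      (RedPair C P →
        C' Q.1 = some ⟨BType.openB, Q.2⟩ ∧ C' Q.2 = some ⟨BType.closeB, Q.1⟩) ∧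
      (BluePair C P →
        C' Q.1 = some ⟨BType.openR, Q.2⟩ ∧ C' Q.2 = some ⟨BType.closeR, Q.1⟩))

/-- No index of the interval `I` is covered by `C`. -/
def FreeIn {n : ℕ} (C : PState n) (I : Ival n) : Prop := ∀ x ∈ ivSet I, x ∉ areaC C

/-- `I` is a largest subinterval of `J` containing no index covered by `C`. -/
def LargestFree {n : ℕ} (C : PState n) (J I : Ival n) : Prop :=
  ivSet I ⊆ ivSet J ∧ FreeIn C I ∧
    ∀ I', ivSet I' ⊆ ivSet J → FreeIn C I' → ivLen I' ≤ ivLen I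

/-- Specification of one round of the game played by the adversary (`PlayRound`),
against a prover whose memory is bounded by `w`. -/
def PlayRoundSpec {n : ℕ} (w : ℕ) (C : PState n) (I : Ival n) (ρ C' ρ' : PState n) : Prop :=
  memSize ρ' ≤ w ∧
  ((∃ S : Finset (Fin n),
      ρ' = (fun j => if j ∈ S then none else ρ j) ∧
      (∀ i, C' i = C i ∨ C' i = none) ∧ IsConfig C' ∧ Dominates C' ρ' ∧
      (∀ P, PairOf C' P → ¬ Dominates (removePair C' P) ρ')) ∨
   (∃ i σ, i ∈ areaC C ∧
      (∃ Cc, IsConfig Cc ∧ IsClosedC Cc ∧ ExtendsPS C Cc ∧ ExtendsPS ρ Cc ∧ Cc i = some σ) ∧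
      ρ' = Function.update ρ i (some σ) ∧ C' = C) ∨
   (∃ i : Fin n, i ∉ areaC C ∧
      ((2 * (i : ℕ) < (I.1 : ℕ) + (I.2 : ℕ) ∧
        ρ' = Function.update ρ i (some ⟨BType.trivR, i⟩) ∧
        C' = Function.update C i (some ⟨BType.trivR, i⟩)) ∨
       ((I.1 : ℕ) + (I.2 : ℕ) ≤ 2 * (i : ℕ) ∧
        ρ' = Function.update ρ i (some ⟨BType.trivB, i⟩) ∧
        C' = Function.update C i (some ⟨BType.trivB, i⟩)))))

/-- A successful (non-failing) run of `Adversary(C, I, ℓ)` transforming the game state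
`ρ` into `ρ'` and returning the configuration `C'`.  At depth `ℓ₀` it plays one round
of the game; at smaller depth it iterates `d` times: choose a largest free interval,
apply `Move`, choose a largest free subinterval, and recurse. -/
inductive AdvRun (n w ℓ₀ d : ℕ) :
    ℕ → PState n → Ival n → PState n → PState n → PState n → Prop
  | base (C : PState n) (I : Ival n) (ρ C' ρ' : PState n) :
      n ≤ ivLen I * (4 * w) ^ ℓ₀ →
      PlayRoundSpec w C I ρ C' ρ' →
      AdvRun n w ℓ₀ d ℓ₀ C I ρ C' ρ'
  | step (ℓ : ℕ) (C : PState n) (I : Ival n) (ρ : PState n)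
      (Ct Cm ρt : ℕ → PState n) (It Iv : ℕ → Ival n) :
      ℓ < ℓ₀ →
      n ≤ ivLen I * (4 * w) ^ ℓ →
      Ct 0 = C → ρt 0 = ρ →
      (∀ i, i < d → LargestFree (Ct i) I (It i)) →
      (∀ i, i < d → MoveSpec (Ct i) (It i) (Cm i)) →
      (∀ i, i < d → LargestFree (Cm i) (It i) (Iv i)) →
      (∀ i, i < d → AdvRun n w ℓ₀ d (ℓ + 1) (Cm i) (Iv i) (ρt i) (Ct (i + 1)) (ρt (i + 1))) →
      AdvRun n w ℓ₀ d ℓ C I ρ (Ct d) (ρt d)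

/-- The recursive call data of a (non-failing) call `Adversary(C, I, ℓ)` at recursion
depth `ℓ < ℓ₀`: the sequences `C̃_i = Ct i`, `C_i = Cm i`, `Ĩ_i = It i`, `I_i = Iv i`
and game states `ρt i`, related as in the adversary strategy. -/
def CallData (n w ℓ₀ d ℓ : ℕ) (C : PState n) (I : Ival n) (ρ : PState n)
    (Ct Cm ρt : ℕ → PState n) (It Iv : ℕ → Ival n) : Prop :=
  ℓ < ℓ₀ ∧ n ≤ ivLen I * (4 * w) ^ ℓ ∧ Ct 0 = C ∧ ρt 0 = ρ ∧
  (∀ i, i < d → LargestFree (Ct i) I (It i)) ∧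
  (∀ i, i < d → MoveSpec (Ct i) (It i) (Cm i)) ∧
  (∀ i, i < d → LargestFree (Cm i) (It i) (Iv i)) ∧
  (∀ i, i < d → AdvRun n w ℓ₀ d (ℓ + 1) (Cm i) (Iv i) (ρt i) (Ct (i + 1)) (ρt (i + 1)))


/-- The configuration consisting of the pairs of `C1` not present in `C2` has an
`s`-buffer in the interval `I = [a, b]`: every such pair contained in `[1, a+s]` is a
trivial red pair, and every such pair contained in `[b-s, n]` is a trivial blue pair. -/
def DiffBuffer {n : ℕ} (C1 C2 : PState n) (s : ℕ) (I : Ival n) : Prop :=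
  ∀ P : Ival n, PairOf C1 P → ¬(C2 P.1 = C1 P.1 ∧ C2 P.2 = C1 P.2) →
    ((P.2 : ℕ) ≤ (I.1 : ℕ) + s → P.1 = P.2 ∧ C1 P.1 = some ⟨BType.trivR, P.1⟩) ∧
    ((I.2 : ℕ) ≤ (P.1 : ℕ) + s → P.1 = P.2 ∧ C1 P.1 = some ⟨BType.trivB, P.1⟩)


/-!
A pair of `C̃_{i+1}` missing from `C` is either new in the recursive call of step `i` (and then
buffered by the third hypothesis, since `I_i ⊆ I` and `c_ℓ ≤ c_{ℓ+1}`), or already a pair of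
`C̃_i` (buffered by the first), or created by `Move(C̃_i, Ĩ_i)`. A created pair encloses a red
pair of `C̃_i` to the right of `Ĩ_i` or a blue one to its left; as `Ĩ_i` reaches past distance
`c_ℓ` from both ends of `I`, it can only come near an end of `I` by enclosing a blue pair near
the left end or a red pair near the right end. But `C̃_i` has no such pairs: after
`Move(C̃_{i-1}, Ĩ_{i-1})` red pairs start left of `Ĩ_{i-1}` and blue pairs end right of it, and by
the second hypothesis the call of step `i - 1` adds near the ends only trivial pairs of the right
colour. The interval bounds hold because `ε = 1/10` makes every `I_j` longer than `4dw + 2`.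
-/

section Pairs

variable {n : ℕ} {C C' : PState n}

lemma PairOf.eq_of_endpoint {P Q : Ival n} (hP : PairOf C P) (hQ : PairOf C Q) {x : Fin n}
    (hxP : x = P.1 ∨ x = P.2) (hxQ : x = Q.1 ∨ x = Q.2) : P = Q := by
  obtain ⟨hPle, σ, τ, hσ, hτ, hσp, hτp⟩ := hP
  obtain ⟨hQle, σ', τ', hσ', hτ', hσ'p, hτ'p⟩ := hQ
  grind

lemma PairOf.congr {P : Ival n} (hP : PairOf C P) (h₁ : C' P.1 = C P.1) (h₂ : C' P.2 = C P.2) :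
    PairOf C' P := by
  obtain ⟨hle, σ, τ, hσ, hτ, hσp, hτp⟩ := hP
  exact ⟨hle, σ, τ, h₁.trans hσ, h₂.trans hτ, hσp, hτp⟩

lemma PairOf.not_mem_endpts {S : Set (Ival n)} {Q : Ival n} (hQ : PairOf C Q) (hQS : Q ∉ S)
    (hS : ∀ P ∈ S, PairOf C P) {x : Fin n} (hx : x = Q.1 ∨ x = Q.2) : x ∉ Endpts S := by
  rintro ⟨P, hP, hxP⟩
  exact hQS (hQ.eq_of_endpoint (hS P hP) hx hxP ▸ hP)

lemma RedPair.not_bluePair {P : Ival n} (h : RedPair C P) : ¬ BluePair C P := by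
  rintro ⟨σ, hσ, hb⟩
  obtain ⟨τ, hτ, hr⟩ := h
  rw [hσ, Option.some_inj] at hτ
  subst hτ
  rcases hb with hb | hb <;> rcases hr with hr | hr <;> simp_all

lemma FreeIn.lt_or_lt {J : Ival n} (hfree : FreeIn C J) {x : Fin n} (hx : x ∈ areaC C) :
    (x : ℕ) < J.1 ∨ (J.2 : ℕ) < x := by
  by_contra! h
  exact hfree x (Set.mem_Icc.mpr ⟨Fin.le_def.mpr h.1, Fin.le_def.mpr h.2⟩) hx

end Pairs

section Move

variable {n : ℕ} {C C' : PState n} {J : Ival n}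

lemma MoveSpec.pairOf_cases (hmove : MoveSpec C J C') {Q : Ival n} (hQ : PairOf C' Q) :
    (PairOf C Q ∧ Q ∉ Repl C J ∧ C' Q.1 = C Q.1 ∧ C' Q.2 = C Q.2) ∨
    ∃ P ∈ Repl C J, (Q.1 : ℕ) ≤ P.1 ∧ (P.2 : ℕ) ≤ Q.2 ∧
      (BluePair C' Q → RedPair C P) ∧ (RedPair C' Q → BluePair C P) := by
  obtain ⟨New, g, -, hsrc, harea, -, hpair, hsame, -, hcol⟩ := hmove
  by_cases hnew : Q ∈ New
  · right
    obtain ⟨P, hP, rfl⟩ := hsrc Q hnew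
    have hsub : ∀ x ∈ areaP P, x ∈ areaP (g P) := fun x ⟨hx₁, hx₂⟩ => by
      rw [harea _ hnew]
      refine ⟨P, hP, rfl, ?_⟩
      simp only [extArea, Set.mem_ofPred_eq, Fin.le_def] at hx₁ hx₂ ⊢
      omega
    have hP₁ := (hsub P.1 ⟨le_rfl, hP.1.1⟩).1
    have hP₂ := (hsub P.2 ⟨hP.1.1, le_rfl⟩).2
    refine ⟨P, hP, hP₁, hP₂, fun hblue => ?_, fun hred => ?_⟩
    · rcases hP.2 with ⟨hPred, -⟩ | ⟨hPblue, -⟩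
      · exact hPred
      · exact absurd hblue
          (RedPair.not_bluePair ⟨_, ((hcol _ hnew P hP rfl).2 hPblue).1, Or.inr rfl⟩)
    · rcases hP.2 with ⟨hPred, -⟩ | ⟨hPblue, -⟩
      · exact absurd (⟨_, ((hcol _ hnew P hP rfl).1 hPred).1, Or.inr rfl⟩ : BluePair C' (g P))
          hred.not_bluePair
      · exact hPblue
  · left
    obtain ⟨hQC, hQrepl⟩ := ((hpair Q).1 hQ).resolve_right hnew
    have hsame' : ∀ x, x = Q.1 ∨ x = Q.2 → C' x = C x := fun x hx =>
      hsame x (hQC.not_mem_endpts hQrepl (fun P hP => hP.1) hx)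
        (hQ.not_mem_endpts hnew (fun P hP => (hpair P).2 (Or.inr hP)) hx)
    exact ⟨hQC, hQrepl, hsame' _ (Or.inl rfl), hsame' _ (Or.inr rfl)⟩

def ColourSorted (C : PState n) (a b : ℕ) : Prop :=
  (∀ P, PairOf C P → BluePair C P → a < (P.2 : ℕ)) ∧
  (∀ P, PairOf C P → RedPair C P → (P.1 : ℕ) < b)

lemma ColourSorted.mono {a b a' b' : ℕ} (h : ColourSorted C a b) (ha : a' ≤ a) (hb : b ≤ b') :
    ColourSorted C a' b' :=
  ⟨fun P hP hblue => ha.trans_lt (h.1 P hP hblue), fun P hP hred => (h.2 P hP hred).trans_le hb⟩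

lemma MoveSpec.colourSorted (hmove : MoveSpec C J C') (hfree : FreeIn C J) :
    ColourSorted C' J.2 J.1 := by
  refine ⟨fun Q hQ hblue => ?_, fun Q hQ hred => ?_⟩
  · rcases hmove.pairOf_cases hQ with ⟨hQC, hQrepl, hQ₁, -⟩ | ⟨P, hP, -, hP₂, hsrc, -⟩
    · obtain ⟨σ, hσ, hb⟩ := hblue
      have hnot : ¬ (Q.2 : ℕ) < J.1 := fun h => hQrepl ⟨hQC, Or.inr ⟨⟨σ, hQ₁ ▸ hσ, hb⟩, h⟩⟩
      exact (hfree.lt_or_lt ⟨Q, hQC, hQC.1, le_rfl⟩).resolve_left hnot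
    · rcases hP.2 with ⟨-, hlt⟩ | ⟨hPblue, -⟩
      · have := hP.1.1; omega
      · exact absurd hPblue (hsrc hblue).not_bluePair
  · rcases hmove.pairOf_cases hQ with ⟨hQC, hQrepl, hQ₁, -⟩ | ⟨P, hP, hP₁, -, -, hsrc⟩
    · obtain ⟨σ, hσ, hr⟩ := hred
      have hnot : ¬ (J.2 : ℕ) < Q.1 := fun h => hQrepl ⟨hQC, Or.inl ⟨⟨σ, hQ₁ ▸ hσ, hr⟩, h⟩⟩
      exact (hfree.lt_or_lt ⟨Q, hQC, le_rfl, hQC.1⟩).resolve_right hnot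
    · rcases hP.2 with ⟨hPred, -⟩ | ⟨-, hlt⟩
      · exact absurd (hsrc hred) hPred.not_bluePair
      · have := hP.1.1; omega

end Move

section Buffer

variable {n : ℕ} {C C₁ C₁' C₂ : PState n} {I J K : Ival n} {c s : ℕ}

lemma DiffBuffer.colourSorted {a b : ℕ} (hbuf : DiffBuffer C₂ C₁ s K) (h : ColourSorted C₁ a b)
    (ha : a ≤ K.1 + s) (hb : K.2 ≤ b + s) : ColourSorted C₂ a b := by
  refine ⟨fun P hP hblue => ?_, fun P hP hred => ?_⟩
  · by_contra! hnear
    by_cases hag : C₁ P.1 = C₂ P.1 ∧ C₁ P.2 = C₂ P.2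
    · obtain ⟨σ, hσ, hb⟩ := hblue
      exact hnear.not_gt (h.1 P (hP.congr hag.1 hag.2) ⟨σ, hag.1.trans hσ, hb⟩)
    · exact (RedPair.not_bluePair ⟨_, ((hbuf P hP hag).1 (by omega)).2, Or.inl rfl⟩) hblue
  · by_contra! hnear
    by_cases hag : C₁ P.1 = C₂ P.1 ∧ C₁ P.2 = C₂ P.2
    · obtain ⟨σ, hσ, hr⟩ := hred
      exact hnear.not_gt (h.2 P (hP.congr hag.1 hag.2) ⟨σ, hag.1.trans hσ, hr⟩)
    · exact hred.not_bluePair ⟨_, ((hbuf P hP hag).2 (by omega)).2, Or.inl rfl⟩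

lemma DiffBuffer.of_move {c' : ℕ} (h₁ : DiffBuffer C₁ C c I) (h₂ : DiffBuffer C₂ C₁' c' K)
    (hmove : MoveSpec C₁ J C₁') (hsorted : ColourSorted C₁ (I.1 + c) (I.2 - c))
    (hJ₁ : (I.1 : ℕ) + c < J.2) (hJ₂ : (J.1 : ℕ) + c < I.2)
    (hK₁ : (I.1 : ℕ) ≤ K.1) (hK₂ : (K.2 : ℕ) ≤ I.2) (hc : c ≤ c') :
    DiffBuffer C₂ C c I := by
  intro P hP hdiff
  by_cases hag : C₁' P.1 = C₂ P.1 ∧ C₁' P.2 = C₂ P.2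
  swap
  · exact ⟨fun h => (h₂ P hP hag).1 (by omega), fun h => (h₂ P hP hag).2 (by omega)⟩
  rcases hmove.pairOf_cases (hP.congr hag.1 hag.2) with
    ⟨hP₁, -, e₁, e₂⟩ | ⟨P₀, hP₀, hle₁, hle₂, -, -⟩
  · simp only [← hag.1, ← hag.2, e₁, e₂] at hdiff ⊢
    exact h₁ P hP₁ hdiff
  · have hP₀le := hP₀.1.1
    have hfar : (I.1 : ℕ) + c < P.2 ∧ (P.1 : ℕ) + c < I.2 := by
      rcases hP₀.2 with ⟨hred, hlt⟩ | ⟨hblue, hlt⟩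
      · have := hsorted.2 P₀ hP₀.1 hred; omega
      · have := hsorted.1 P₀ hP₀.1 hblue; omega
    exact ⟨fun h => by omega, fun h => by omega⟩

end Buffer

section Length

variable {n : ℕ}

lemma ivLen_eq (I : Ival n) : ivLen I = I.2 + 1 - I.1 := by
  rw [ivLen, ivSet, ← Finset.coe_Icc, Set.ncard_coe_finset, Fin.card_Icc]

lemma endpoint_bounds_of_nested {I J K : Ival n} {c : ℕ} (hKJ : ivSet K ⊆ ivSet J)
    (hJI : ivSet J ⊆ ivSet I) (hK : c + 2 ≤ ivLen K) :
    (I.1 : ℕ) ≤ K.1 ∧ (K.2 : ℕ) ≤ I.2 ∧ (I.1 : ℕ) + c < J.2 ∧ (J.1 : ℕ) + c < I.2 := by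
  rw [ivLen_eq] at hK
  have hK' : K.1 ≤ K.2 := Fin.le_def.mpr (by omega)
  obtain ⟨hJK₁, hJK₂⟩ := (Set.Icc_subset_Icc_iff hK').1 hKJ
  obtain ⟨hIJ₁, hIJ₂⟩ := (Set.Icc_subset_Icc_iff (hJK₁.trans (hK'.trans hJK₂))).1 hJI
  simp only [Fin.le_def] at hJK₁ hJK₂ hIJ₁ hIJ₂
  omega

lemma AdvRun.le_ivLen_mul {w ℓ₀ d ℓ : ℕ} {C : PState n} {I : Ival n} {ρ C' ρ' : PState n}
    (h : AdvRun n w ℓ₀ d ℓ C I ρ C' ρ') (hw : 0 < w) : n ≤ ivLen I * (4 * w) ^ ℓ₀ := by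
  cases h with
  | base _ _ _ _ _ hlen _ => exact hlen
  | step _ _ _ _ _ _ _ _ _ hℓ hlen =>
    exact hlen.trans (Nat.mul_le_mul_left _ (Nat.pow_le_pow_right (by omega) hℓ.le))

end Length

section Numerics

open Real

lemma pow_le_rpow_of_le_floor {x y ε : ℝ} {k : ℕ} (hx : 1 < x) (hy : 0 < y) (hk₀ : k ≠ 0)
    (hk : k ≤ ⌊ε * log y / log x⌋₊) : x ^ k ≤ y ^ ε := by
  have hlogx : 0 < log x := log_pos hx
  rw [Nat.le_floor_iff' hk₀, le_div_iff₀ hlogx] at hk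
  rw [← log_le_log_iff (by positivity) (rpow_pos_of_pos hy ε), log_pow, log_rpow hy]
  linarith

lemma room_for_buffers {n w ℓ₀ d : ℕ} (hw : 2 ≤ w) (hℓ₀ : ℓ₀ ≠ 0)
    (hℓ₀_eq : ℓ₀ = ⌊10⁻¹ * log n / log w⌋₊) (hd : d = ⌊(n : ℝ) ^ (10⁻¹ : ℝ)⌋₊) :
    (4 * d * w + 2) * (4 * w) ^ ℓ₀ ≤ n := by
  have hn : (0 : ℝ) < n := by
    rcases Nat.eq_zero_or_pos n with rfl | hn
    · exact absurd (by simpa using hℓ₀_eq) hℓ₀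
    · exact_mod_cast hn
  set x := (n : ℝ) ^ (10⁻¹ : ℝ)
  have hw' : (2 : ℝ) ≤ w := by exact_mod_cast hw
  have hwx : (w : ℝ) ^ ℓ₀ ≤ x :=
    pow_le_rpow_of_le_floor (by linarith) hn hℓ₀ hℓ₀_eq.le
  have hw_le : (w : ℝ) ≤ x := (le_self_pow₀ (by linarith) hℓ₀).trans hwx
  have hd_le : (d : ℝ) ≤ x := hd ▸ Nat.floor_le (by positivity)
  have hpow : (4 * (w : ℝ)) ^ ℓ₀ ≤ x ^ 3 :=
    calc (4 * (w : ℝ)) ^ ℓ₀ ≤ ((w : ℝ) ^ 3) ^ ℓ₀ := pow_le_pow_left₀ (by positivity)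
          (by nlinarith [mul_le_mul hw' hw' (by norm_num) (by linarith)]) _
      _ = ((w : ℝ) ^ ℓ₀) ^ 3 := by rw [← pow_mul, ← pow_mul, mul_comm]
      _ ≤ x ^ 3 := pow_le_pow_left₀ (by positivity) hwx _
  have hx10 : x ^ 10 = n := by
    simpa using rpow_inv_natCast_pow hn.le (n := 10) (by norm_num)
  have hx2 : 2 ≤ x := hw'.trans hw_le
  have hfactor : (4 * d * w + 2 : ℝ) ≤ 6 * x ^ 2 := by nlinarith [mul_le_mul hd_le hw_le]
  have : ((4 * d * w + 2) * (4 * w) ^ ℓ₀ : ℝ) ≤ n :=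
    calc ((4 * d * w + 2) * (4 * w) ^ ℓ₀ : ℝ) ≤ 6 * x ^ 2 * x ^ 3 :=
          mul_le_mul hfactor hpow (by positivity) (by positivity)
      _ = 6 * x ^ 5 := by ring
      _ ≤ x ^ 5 * x ^ 5 := by
          have h32 : (2 : ℝ) ^ 5 ≤ x ^ 5 := pow_le_pow_left₀ (by norm_num) hx2 5
          exact mul_le_mul_of_nonneg_right (by linarith) (by positivity)
      _ = n := by rw [← hx10]; ring
  exact_mod_cast this

end Numerics

/-- **Buffer Lemma.** With `c_ℓ = 4dw - (ℓ₀ - ℓ)`: if `C̃_i \ C` has a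
`c_ℓ`-buffer in `I`, `C̃_i \ C_{i-1}` has a `c_{ℓ+1}`-buffer in `I_{i-1}`, and
`C̃_{i+1} \ C_i` has a `c_{ℓ+1}`-buffer in `I_i`, then `C̃_{i+1} \ C` has a
`c_ℓ`-buffer in `I`. -/
theorem buffer_lemma :
    ∃ ε : ℝ, 0 < ε ∧ ∃ N : ℕ, ∀ n ≥ N, ∀ w : ℕ, 2 ≤ w →
      ∀ ℓ₀ d : ℕ, ℓ₀ = ⌊ε * Real.log n / Real.log w⌋₊ → d = ⌊(n : ℝ) ^ ε⌋₊ →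
        ∀ (ℓ : ℕ) (C : PState n) (I : Ival n) (ρ : PState n)
          (Ct Cm ρt : ℕ → PState n) (It Iv : ℕ → Ival n),
          CallData n w ℓ₀ d ℓ C I ρ Ct Cm ρt It Iv →
          ∀ i : ℕ, 1 ≤ i → i ≤ d - 1 →
            DiffBuffer (Ct i) C (4 * d * w - (ℓ₀ - ℓ)) I →
            DiffBuffer (Ct i) (Cm (i - 1)) (4 * d * w - (ℓ₀ - (ℓ + 1))) (Iv (i - 1)) →
            DiffBuffer (Ct (i + 1)) (Cm i) (4 * d * w - (ℓ₀ - (ℓ + 1))) (Iv i) →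
            DiffBuffer (Ct (i + 1)) C (4 * d * w - (ℓ₀ - ℓ)) I := by
  refine ⟨10⁻¹, by norm_num, 0, fun n _ w hw ℓ₀ d hℓ₀ hd ℓ C I ρ Ct Cm ρt It Iv hcall i hi hid
    h₁ h₂ h₃ => ?_⟩
  obtain ⟨hℓ, -, -, -, hlargest, hmove, hlargest', hrun⟩ := hcall
  set c := 4 * d * w - (ℓ₀ - ℓ)
  have hroom := room_for_buffers hw (by omega) hℓ₀ hd
  have hbounds (j : ℕ) (hj : j < d) : (I.1 : ℕ) ≤ (Iv j).1 ∧ ((Iv j).2 : ℕ) ≤ I.2 ∧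
      (I.1 : ℕ) + c < (It j).2 ∧ ((It j).1 : ℕ) + c < I.2 := by
    refine endpoint_bounds_of_nested (hlargest' j hj).1 (hlargest j hj).1 (Nat.le_of_mul_le_mul_right ?_
      (pow_pos (by omega : 0 < 4 * w) ℓ₀))
    calc (c + 2) * (4 * w) ^ ℓ₀ ≤ (4 * d * w + 2) * (4 * w) ^ ℓ₀ := by gcongr; omega
      _ ≤ ivLen (Iv j) * (4 * w) ^ ℓ₀ := hroom.trans ((hrun j hj).le_ivLen_mul (by omega))
  obtain ⟨hK₁, hK₂, hJ₁, hJ₂⟩ := hbounds i (by omega)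
  obtain ⟨hK₁', hK₂', hJ₁', hJ₂'⟩ := hbounds (i - 1) (by omega)
  have hmoved : ColourSorted (Cm (i - 1)) (I.1 + c) (I.2 - c) :=
    ((hmove (i - 1) (by omega)).colourSorted (hlargest (i - 1) (by omega)).2.1).mono
      hJ₁'.le (by omega)
  have hsorted : ColourSorted (Ct i) (I.1 + c) (I.2 - c) :=
    h₂.colourSorted hmoved (by omega) (by omega)
  exact h₁.of_move h₃ (hmove i (by omega)) hsorted hJ₁ hJ₂ hK₁ hK₂ (by omega)

end Paper
end

section
/- For every n ≥ 2, no string s ∈ Σ^n satisfies all of the bracket axioms (A1)–(A4); equivalently, every string s ∈ Σ^n satisfying (A1), (A2) and (A3) contains an index i ∈ [n−1] with b(s_i) ∈ {]_r, ⟨⟩_r} and b(s_{i+1}) ∈ {[_b, ⟨⟩_b}. -/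
namespace Paper


/-- The bracket principle: every string satisfying axioms
(A1)-(A3) contains a red-to-blue transition, i.e. it falsifies (A4); hence no string
satisfies all of (A1)-(A4). -/
theorem bracket_principle (n : ℕ) (hn : 2 ≤ n) (s : Fin n → Sym n)
    (hA1start : ∀ i : Fin n, (i : ℕ) = 0 → ((s i).b = BType.trivR ∨ (s i).b = BType.openR))
    (hA1end : ∀ i : Fin n, (i : ℕ) = n - 1 → ((s i).b = BType.trivB ∨ (s i).b = BType.closeB))
    (hA2ptr : ∀ i j : Fin n, (s i).p = j → (s j).p = i)
    (hA2triv : ∀ i : Fin n, (s i).p = i → ((s i).b = BType.trivR ∨ (s i).b = BType.trivB))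
    (hA2pair : ∀ i j : Fin n, i < j → (s i).p = j → (s j).p = i →
      (((s i).b = BType.openR ∧ (s j).b = BType.closeR) ∨
       ((s i).b = BType.openB ∧ (s j).b = BType.closeB)))
    (hA3 : ∀ i i' j j' : Fin n, (s i).p = j → (s j).p = i → (s i').p = j' → (s j').p = i' →
      ¬(i < i' ∧ i' < j ∧ j < j')) :
    ∃ i j : Fin n, (j : ℕ) = (i : ℕ) + 1 ∧
      ((s i).b = BType.closeR ∨ (s i).b = BType.trivR) ∧
      ((s j).b = BType.openB ∨ (s j).b = BType.trivB) := by
  by_contra hcon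
  push_neg at hcon
  -- helper: trivial symbols are self-paired
  have hself : ∀ i : Fin n, ((s i).b = BType.trivR ∨ (s i).b = BType.trivB) → (s i).p = i := by
    intro i hi
    by_contra hne
    have hp := hA2ptr i ((s i).p) rfl
    rcases lt_trichotomy i ((s i).p) with h | h | h
    · rcases hA2pair i _ h rfl hp with ⟨h1, _⟩ | ⟨h1, _⟩ <;>
        rcases hi with h2 | h2 <;> rw [h1] at h2 <;> exact absurd h2 (by decide)
    · exact hne h.symm
    · rcases hA2pair _ i h hp rfl with ⟨_, h1⟩ | ⟨_, h1⟩ <;>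
        rcases hi with h2 | h2 <;> rw [h1] at h2 <;> exact absurd h2 (by decide)
  have key : ∀ k : ℕ, ∀ i : Fin n, n - (i : ℕ) ≤ k →
      ((s i).b = BType.trivR ∨ (s i).b = BType.openR) →
      (∀ a : Fin n, (a : ℕ) < (i : ℕ) → ((s a).p : ℕ) < (i : ℕ)) → False := by
    intro k
    induction k with
    | zero => intro i hk _ _; have := i.isLt; omega
    | succ k ih =>
      intro i hk hib hinv
      rcases hib with htriv | hopen
      · -- s i is trivR : move to i+1
        have pI : (s i).p = i := hself i (Or.inl htriv)
        have hi_lt : (i : ℕ) < n - 1 := by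
          by_contra h
          have he : (i : ℕ) = n - 1 := by have := i.isLt; omega
          rcases hA1end i he with h2 | h2 <;> rw [htriv] at h2 <;> exact absurd h2 (by decide)
        set i' : Fin n := ⟨(i : ℕ) + 1, by omega⟩ with hi'
        have hnb := hcon i i' rfl (Or.inr htriv)
        -- analyze (s i')
        have hq := hA2ptr i' ((s i').p) rfl
        have hgood : (s i').b = BType.trivR ∨ (s i').b = BType.openR := by
          rcases lt_trichotomy i' ((s i').p) with h | h | h
          · rcases hA2pair i' _ h rfl hq with ⟨h1, _⟩ | ⟨h1, _⟩
            · exact Or.inr h1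
            · exact absurd h1 hnb.1
          · rcases hA2triv i' h.symm with h1 | h1
            · exact Or.inl h1
            · exact absurd h1 hnb.2
          · -- (s i').p < i', so partner q ≤ i; impossible
            exfalso
            have hqv : (((s i').p : ℕ)) < (i : ℕ) + 1 := h
            rcases Nat.lt_succ_iff_lt_or_eq.mp hqv with h2 | h2
            · have := hinv ((s i').p) h2
              rw [hq] at this
              simp [hi'] at this
            · have hqe : (s i').p = i := Fin.ext h2
              rw [hqe] at hq
              rw [pI] at hq
              have : (i : ℕ) = (i' : ℕ) := congrArg Fin.val hq
              simp [hi'] at this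
        refine ih i' (by simp [hi']; omega) hgood ?_
        intro a ha
        simp only [hi'] at ha ⊢
        rcases Nat.lt_succ_iff_lt_or_eq.mp ha with h2 | h2
        · have := hinv a h2; omega
        · have : a = i := Fin.ext h2
          rw [this, pI]; omega
      · -- s i is openR : jump past its partner j
        have hp := hA2ptr i ((s i).p) rfl
        set j : Fin n := (s i).p with hj
        have hij : i < j := by
          rcases lt_trichotomy i j with h | h | h
          · exact h
          · exfalso
            rcases hA2triv i h.symm with h1 | h1 <;> rw [hopen] at h1 <;>
              exact absurd h1 (by decide)
          · exfalso
            rcases hA2pair j i h hp rfl with ⟨_, h1⟩ | ⟨_, h1⟩ <;> rw [hopen] at h1 <;>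
              exact absurd h1 (by decide)
        have hjc : (s j).b = BType.closeR := by
          rcases hA2pair i j hij rfl hp with ⟨_, h1⟩ | ⟨h1, _⟩
          · exact h1
          · rw [hopen] at h1; exact absurd h1 (by decide)
        have hj_lt : (j : ℕ) < n - 1 := by
          by_contra h
          have he : (j : ℕ) = n - 1 := by have := j.isLt; omega
          rcases hA1end j he with h2 | h2 <;> rw [hjc] at h2 <;> exact absurd h2 (by decide)
        set j' : Fin n := ⟨(j : ℕ) + 1, by omega⟩ with hj'
        have hnb := hcon j j' rfl (Or.inl hjc)
        have hq := hA2ptr j' ((s j').p) rfl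
        -- no pair can reach into (i, j] from outside or cross it
        have hnocross : ∀ a : Fin n, (i : ℕ) < (a : ℕ) → (a : ℕ) < (j : ℕ) →
            ((s a).p : ℕ) ≤ (j : ℕ) := by
          intro a ha1 ha2
          by_contra h
          have haq : a < (s a).p := by
            have : (a : ℕ) < ((s a).p : ℕ) := by omega
            exact this
          exact hA3 i a j ((s a).p) rfl hp rfl (hA2ptr a _ rfl)
            ⟨ha1, (by omega : (a : ℕ) < (j : ℕ)), (by omega : (j : ℕ) < ((s a).p : ℕ))⟩
        have hgood : (s j').b = BType.trivR ∨ (s j').b = BType.openR := by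
          rcases lt_trichotomy j' ((s j').p) with h | h | h
          · rcases hA2pair j' _ h rfl hq with ⟨h1, _⟩ | ⟨h1, _⟩
            · exact Or.inr h1
            · exact absurd h1 hnb.1
          · rcases hA2triv j' h.symm with h1 | h1
            · exact Or.inl h1
            · exact absurd h1 hnb.2
          · exfalso
            have hqv : (((s j').p : ℕ)) < (j : ℕ) + 1 := h
            set q : Fin n := (s j').p with hqd
            have hqj' : ((s q).p : ℕ) = (j : ℕ) + 1 := by rw [hq]
            rcases lt_trichotomy ((q : ℕ)) ((i : ℕ)) with h2 | h2 | h2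
            · have := hinv q h2; omega
            · have hqe : q = i := Fin.ext h2
              rw [hqe] at hqj'
              rw [← hj] at hqj'
              omega
            · rcases lt_trichotomy ((q : ℕ)) ((j : ℕ)) with h3 | h3 | h3
              · have := hnocross q h2 h3; omega
              · have hqe : q = j := Fin.ext h3
                rw [hqe] at hq
                rw [hp] at hq
                have : (i : ℕ) = (j : ℕ) + 1 := congrArg Fin.val hq
                have : (i : ℕ) < (j : ℕ) := hij
                omega
              · omega
        refine ih j' ?_ hgood ?_
        · have : (i : ℕ) < (j : ℕ) := hij
          simp [hj']; omega
        · intro a ha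
          simp only [hj'] at ha ⊢
          have hiv : (i : ℕ) < (j : ℕ) := hij
          rcases lt_trichotomy ((a : ℕ)) ((i : ℕ)) with h2 | h2 | h2
          · have := hinv a h2; omega
          · have : a = i := Fin.ext h2
            rw [this, ← hj]; omega
          · rcases lt_trichotomy ((a : ℕ)) ((j : ℕ)) with h3 | h3 | h3
            · have h4 := hnocross a h2 h3
              -- also rule out p a = j (j is paired with i)
              rcases Nat.lt_or_ge ((s a).p : ℕ) (j : ℕ) with h5 | h5
              · omega
              · have h6 : ((s a).p : ℕ) = (j : ℕ) := by omega
                have : (s a).p = j := Fin.ext h6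
                have := hA2ptr a _ rfl
                rw [‹(s a).p = j›] at this
                rw [hp] at this
                have : (a : ℕ) = (i : ℕ) := congrArg Fin.val this.symm
                omega
            · have : a = j := Fin.ext h3
              rw [this, hp]; omega
            · omega
  exact key n ⟨0, by omega⟩ (by simp) (hA1start _ rfl) (by intro a ha; simp at ha)

end Paper
end
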